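/- arXiv:1401.5691 — 16 statements merged into one kernel-verified Lean document; each statement's English description precedes it below -/
import Mathlib

section
/- Fix w, v : ℤ² → ℝ related by the point transformation v_{n,m} = √3·w_{n,m} − 1 for all (n,m) ∈ ℤ². Then v satisfies equation (Quadrelli1) with parameter τ = 0, namely v_{n,m} + v_{n+1,m+1} + 2(v_{n+1,m} + v_{n,m+1}) + (1+τ)·v_{n+1,m}v_{n,m+1} + τ·(v_{n+1,m}v_{n+1,m+1} + v_{n,m}v_{n,m+1}) + v_{n,m+1}v_{n+1,m+1} + v_{n,m}v_{n+1,m} + τ·v_{n+1,m}v_{n,m+1}(v_{n,m} + v_{n+1,m+1}) = 0 with τ = 0 for all (n,m) ∈ ℤ², if and only if w satisfies equation (kj1): w_{n,m} w_{n+1,m} + w_{n+1,m} w_{n,m+1} + w_{n,m+1} w_{n+1,m+1} − 1 = 0 for all (n,m) ∈ ℤ². -/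
/-!
Under `v = s * w - 1` with `s * s = 3`, the linear terms of (Quadrelli1) at `τ = 0` cancel, and its
left-hand side is `3` times that of (kj1) plus `q * (s * s - 3)`, where `q` is the quadratic part
of (kj1).
-/

/-- Equation (Quadrelli1) with real parameter τ for a field `v : ℤ² → ℝ`. -/
def Quadrelli1 (τ : ℝ) (v : ℤ → ℤ → ℝ) : Prop :=
  ∀ n m : ℤ,
    v n m + v (n+1) (m+1) + 2 * (v (n+1) m + v n (m+1))
      + (1 + τ) * (v (n+1) m * v n (m+1))
      + τ * (v (n+1) m * v (n+1) (m+1) + v n m * v n (m+1))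
      + v n (m+1) * v (n+1) (m+1) + v n m * v (n+1) m
      + τ * (v (n+1) m * v n (m+1) * (v n m + v (n+1) (m+1))) = 0

/-- Equation (kj1) for a field `w : ℤ² → ℝ`. -/
def Kj1 (w : ℤ → ℤ → ℝ) : Prop :=
  ∀ n m : ℤ,
    w n m * w (n+1) m + w (n+1) m * w n (m+1)
      + w n (m+1) * w (n+1) (m+1) - 1 = 0

theorem quadrelli1_zero_iff_kj1_of_mul_self_eq_three {s : ℝ} (hs : s * s = 3)
    (w v : ℤ → ℤ → ℝ) (hv : ∀ n m : ℤ, v n m = s * w n m - 1) :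
    Quadrelli1 0 v ↔ Kj1 w := by
  refine forall₂_congr fun n m => ?_
  set q := w n m * w (n+1) m + w (n+1) m * w n (m+1) + w n (m+1) * w (n+1) (m+1)
  simp only [hv]
  constructor <;> intro h
  · linear_combination h / 3 - q * hs / 3
  · linear_combination 3 * h + q * hs

theorem quadrelli1_tau_zero_iff_kj1 (w v : ℤ → ℤ → ℝ)
    (hv : ∀ n m : ℤ, v n m = Real.sqrt 3 * w n m - 1) :
    Quadrelli1 0 v ↔ Kj1 w :=
  quadrelli1_zero_iff_kj1_of_mul_self_eq_three (Real.mul_self_sqrt (by norm_num)) w v hv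
end

section
/- Fix w, v : ℤ² → ℝ related by the point transformation v_{n,m} = −(2^{1/3}·w_{n,m} + 1) for all (n,m) ∈ ℤ². Then v satisfies equation (Quadrelli1) with parameter τ = 1 for all (n,m) ∈ ℤ², if and only if w satisfies equation (jk2): w_{n+1,m} w_{n,m+1} (w_{n,m} + w_{n+1,m+1}) + 1 = 0 for all (n,m) ∈ ℤ². -/
/-- Equation (jk2) for a field `w : ℤ² → ℝ`. -/
def Jk2 (w : ℤ → ℤ → ℝ) : Prop :=
  ∀ n m : ℤ,
    w (n+1) m * w n (m+1) * (w n m + w (n+1) (m+1)) + 1 = 0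

theorem two_rpow_one_third_pow_three : ((2 : ℝ) ^ ((1 : ℝ) / 3)) ^ 3 = 2 := by
  rw [one_div, ← Nat.cast_ofNat (R := ℝ) (n := 3)]
  exact Real.rpow_inv_natCast_pow (by norm_num) (by norm_num)

theorem quadrelli1_one_iff_of_affine (k : ℝ) (w v : ℤ → ℤ → ℝ)
    (hv : ∀ n m : ℤ, v n m = -(k * w n m + 1)) :
    Quadrelli1 1 v ↔
      ∀ n m : ℤ, k ^ 3 * (w (n+1) m * w n (m+1) * (w n m + w (n+1) (m+1))) + 2 = 0 := by
  refine forall₂_congr fun n m => ?_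
  simp only [hv]
  -- after the substitution the (Quadrelli1) polynomial is exactly `-(k³ w₁₀ w₀₁ (w₀₀ + w₁₁) + 2)`
  constructor <;> intro h <;> linear_combination -h

theorem quadrelli1_tau_one_iff_jk2 (w v : ℤ → ℤ → ℝ)
    (hv : ∀ n m : ℤ, v n m = -((2 : ℝ) ^ ((1 : ℝ)/3) * w n m + 1)) :
    Quadrelli1 1 v ↔ Jk2 w := by
  rw [quadrelli1_one_iff_of_affine _ w v hv, two_rpow_one_third_pow_three]
  exact forall₂_congr fun n m => by constructor <;> intro h <;> linarith
end

section
/- Let τ ∈ ℝ with τ ≠ 0 and τ ≠ 1, and fix w, v : ℤ² → ℝ related by the point transformation v_{n,m} = ((1−τ)/τ)·w_{n,m} − 1 for all (n,m) ∈ ℤ². Then v satisfies equation (Quadrelli1) with parameter τ for all (n,m) ∈ ℤ², if and only if w satisfies equation (jk3): w_{n,m} w_{n+1,m} + w_{n,m+1} w_{n+1,m+1} + w_{n+1,m} w_{n,m+1} (1 + w_{n,m} + w_{n+1,m+1}) + χ = 0 for all (n,m) ∈ ℤ², where χ = (τ−3)τ² / (1−τ)³. -/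
/-- Equation (jk3) with real parameter χ for a field `w : ℤ² → ℝ`. -/
def Jk3 (χ : ℝ) (w : ℤ → ℤ → ℝ) : Prop :=
  ∀ n m : ℤ,
    w n m * w (n+1) m + w n (m+1) * w (n+1) (m+1)
      + w (n+1) m * w n (m+1) * (1 + w n m + w (n+1) (m+1)) + χ = 0

/-! The point transformation is affine, so it maps the multi-affine left-hand side of
(Quadrelli1) to a multi-affine polynomial in `w`; a direct computation shows that this is
`(1 - τ)³ / τ²` times the left-hand side of (jk3) with `χ = (τ - 3) τ² / (1 - τ)³`.
Since that factor is nonzero for `τ ≠ 0, 1`, the two equations vanish at the same plaquettes. -/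

section Quads

variable {K : Type*} [Field K]

/-- Plaquette values are labelled `a = v_{n,m}`, `b = v_{n+1,m}`, `c = v_{n,m+1}`,
`d = v_{n+1,m+1}`, here and in `jk3Quad`. -/
def quadrelli1Quad (τ a b c d : K) : K :=
  a + d + 2 * (b + c) + (1 + τ) * (b * c) + τ * (b * d + a * c)
    + c * d + a * b + τ * (b * c * (a + d))

def jk3Quad (χ a b c d : K) : K :=
  a * b + c * d + b * c * (1 + a + d) + χ

theorem quadrelli1Quad_pointTransform {τ : K} (hτ0 : τ ≠ 0) (hτ1 : τ ≠ 1) (a b c d : K) :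
    quadrelli1Quad τ ((1 - τ) / τ * a - 1) ((1 - τ) / τ * b - 1) ((1 - τ) / τ * c - 1)
        ((1 - τ) / τ * d - 1)
      = (1 - τ) ^ 3 / τ ^ 2 * jk3Quad ((τ - 3) * τ ^ 2 / (1 - τ) ^ 3) a b c d := by
  have h1τ : 1 - τ ≠ 0 := sub_ne_zero.mpr hτ1.symm
  unfold quadrelli1Quad jk3Quad
  field_simp
  ring

end Quads

theorem quadrelli1_iff_forall_quad (τ : ℝ) (v : ℤ → ℤ → ℝ) :
    Quadrelli1 τ v ↔
      ∀ n m : ℤ, quadrelli1Quad τ (v n m) (v (n+1) m) (v n (m+1)) (v (n+1) (m+1)) = 0 :=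
  Iff.rfl

theorem jk3_iff_forall_quad (χ : ℝ) (w : ℤ → ℤ → ℝ) :
    Jk3 χ w ↔ ∀ n m : ℤ, jk3Quad χ (w n m) (w (n+1) m) (w n (m+1)) (w (n+1) (m+1)) = 0 :=
  Iff.rfl

theorem quadrelli1_iff_jk3 (τ : ℝ) (hτ0 : τ ≠ 0) (hτ1 : τ ≠ 1)
    (w v : ℤ → ℤ → ℝ)
    (hv : ∀ n m : ℤ, v n m = ((1 - τ) / τ) * w n m - 1) :
    Quadrelli1 τ v ↔ Jk3 ((τ - 3) * τ ^ 2 / (1 - τ) ^ 3) w := by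
  have hfactor : (1 - τ) ^ 3 / τ ^ 2 ≠ 0 :=
    div_ne_zero (pow_ne_zero _ (sub_ne_zero.mpr hτ1.symm)) (pow_ne_zero _ hτ0)
  rw [quadrelli1_iff_forall_quad, jk3_iff_forall_quad]
  refine forall₂_congr fun n m => ?_
  rw [hv, hv, hv, hv, quadrelli1Quad_pointTransform hτ0 hτ1, mul_eq_zero,
    or_iff_right hfactor]
end

section
/- Let w : ℤ² → ℝ satisfy equation (kj1): w_{n,m} w_{n+1,m} + w_{n+1,m} w_{n,m+1} + w_{n,m+1} w_{n+1,m+1} − 1 = 0 for all (n,m) ∈ ℤ². Define the symmetry characteristic g_{n,m} := w_{n,m} (w_{n−1,m} w_{n,m} − 1) (w_{n,m} w_{n+1,m} − 1) (w_{n+2,m} w_{n+1,m} − w_{n−1,m} w_{n−2,m}). Then the linearized generalized-symmetry condition holds identically on solutions: for all (n,m) ∈ ℤ², g_{n,m}·w_{n+1,m} + g_{n+1,m}·(w_{n,m} + w_{n,m+1}) + g_{n,m+1}·(w_{n+1,m} + w_{n+1,m+1}) + g_{n+1,m+1}·w_{n,m+1} = 0. (These are the sum of the characteristic at each lattice point of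 the quad, weighted by the partial derivative of the left-hand side of (kj1) with respect to the field at that point; the identity expresses that g is a five-point generalized symmetry of (kj1) in the n-direction.) -/
variable {R : Type*} [CommRing R]

def IsKj1Strip (a b : ℤ → R) : Prop :=
  ∀ k, a k * a (k+1) + a (k+1) * b k + b k * b (k+1) = 1

def bond (a : ℤ → R) (k : ℤ) : R := a k * a (k+1) - 1

def carandiniChar (a : ℤ → R) (k : ℤ) : R :=
  a k * (a (k-1) * a k - 1) * (a k * a (k+1) - 1)
    * (a (k+2) * a (k+1) - a (k-1) * a (k-2))

theorem carandiniChar_eq_bond (a : ℤ → R) (k : ℤ) :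
    carandiniChar a k = a k * bond a (k-1) * bond a k * (bond a (k+1) - bond a (k-2)) := by
  simp only [carandiniChar, bond, sub_add_cancel, sub_add, add_assoc, Int.reduceAdd, Int.reduceSub]
  ring

namespace IsKj1Strip

variable {a b : ℤ → R} (h : IsKj1Strip a b)
include h

theorem bond_fst (k : ℤ) : bond a k = -(b k * (a (k+1) + b (k+1))) := by
  unfold bond
  linear_combination h k

theorem bond_snd (k : ℤ) : bond b k = -(a (k+1) * (a k + b k)) := by
  unfold bond
  linear_combination h k

theorem bond_fst_mul_eq_mul_bond_snd (k : ℤ) : bond a k * a (k+2) = b k * bond b (k+1) := by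
  rw [h.bond_fst, h.bond_snd, add_assoc, one_add_one_eq_two]
  ring

theorem linearized_cofactor_eq_zero (n : ℤ) :
    bond a (n+1) * (bond a (n+2) - bond a (n-1)) + bond b (n-1) * (bond b (n+1) - bond b (n-2))
      - a n * b (n-1) * (bond a (n+1) - bond a (n-2))
      - a (n+2) * b (n+1) * (bond b (n+2) - bond b (n-1)) = 0 := by
  have exchange_right := h.bond_fst_mul_eq_mul_bond_snd (n+1)
  have exchange_left := h.bond_fst_mul_eq_mul_bond_snd (n-2)
  have quad_left := h (n-1)
  have quad_right := h (n+1)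
  simp only [bond, sub_add_cancel, sub_add, add_assoc, Int.reduceAdd, Int.reduceSub]
    at exchange_right exchange_left quad_left quad_right ⊢
  linear_combination a (n+2) * exchange_right + b (n-1) * exchange_left
    - (a (n+1) * a (n+2) - 1) * quad_left + (b (n-1) * b n - 1) * quad_right

theorem linearized_carandiniChar (n : ℤ) :
    carandiniChar a n * a (n+1) + carandiniChar a (n+1) * (a n + b n)
      + carandiniChar b n * (a (n+1) + b (n+1)) + carandiniChar b (n+1) * b n = 0 := by
  have bond_fst_pred := h.bond_fst (n-1)
  have bond_snd_succ := h.bond_snd (n+1)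
  simp only [sub_add_cancel, add_assoc, Int.reduceAdd] at bond_fst_pred bond_snd_succ
  have cofactor := h.linearized_cofactor_eq_zero n
  rw [bond_fst_pred, bond_snd_succ] at cofactor
  simp only [carandiniChar_eq_bond, add_sub_cancel_right, add_sub_assoc, add_assoc, Int.reduceAdd,
    Int.reduceSub, ← sub_eq_add_neg]
  rw [h.bond_fst n, h.bond_snd n, bond_fst_pred, bond_snd_succ]
  linear_combination -(a (n+1) * b n * (a n + b n) * (a (n+1) + b (n+1))) * cofactor

end IsKj1Strip

/-- The five-point symmetry characteristic (Carandini2) in the n-direction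
is a generalized symmetry of (kj1): the linearized symmetry condition holds
identically on solutions. -/
theorem kj1_symmetry_n_direction (w : ℤ → ℤ → ℝ) (hw : Kj1 w)
    (g : ℤ → ℤ → ℝ)
    (hg : ∀ n m : ℤ, g n m =
      w n m * (w (n-1) m * w n m - 1) * (w n m * w (n+1) m - 1)
        * (w (n+2) m * w (n+1) m - w (n-1) m * w (n-2) m)) :
    ∀ n m : ℤ,
      g n m * w (n+1) m + g (n+1) m * (w n m + w n (m+1))
        + g n (m+1) * (w (n+1) m + w (n+1) (m+1))
        + g (n+1) (m+1) * w n (m+1) = 0 := by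
  intro n m
  have strip : IsKj1Strip (w · m) (w · (m+1)) := fun k => sub_eq_zero.mp (hw k m)
  simp only [hg]
  exact strip.linearized_carandiniChar n
end

section
/- Let w : ℤ² → ℝ satisfy equation (kj1): w_{n,m} w_{n+1,m} + w_{n+1,m} w_{n,m+1} + w_{n,m+1} w_{n+1,m+1} − 1 = 0 for all (n,m) ∈ ℤ², and assume w_{n,m} + w_{n,m+1} + w_{n,m+2} ≠ 0 for all (n,m) ∈ ℤ². Define the symmetry characteristic g_{n,m} := w_{n,m} (w_{n,m−1} + w_{n,m}) (w_{n,m} + w_{n,m+1}) (w_{n,m+2} + w_{n,m+1} − w_{n,m−1} − w_{n,m−2}) / [ (w_{n,m−2} + w_{n,m−1} + w_{n,m}) (w_{n,m−1} + w_{n,m} + w_{n,m+1}) (w_{n,m} + w_{n,m+1} + w_{n,m+2}) ]. Then the linearized generalized-symmetry condition holds identically on solutions: for all (n,m) ∈ ℤ², g_{n,m}·w_{n+1,m} + g_{n+1,m}·(w_{n,m} + w_{n,m+1}) + g_{n,m+1}·(w_{n+1,m} + w_{n+1,m+1}) + g_{n+1,m+1}·w_{n,m+1} = 0. (This expresses that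 g is a five-point generalized symmetry of (kj1) in the m-direction.) -/
def Kj1Rows (x y : ℤ → ℝ) : Prop :=
  ∀ k, x k * y k + y k * x (k + 1) + x (k + 1) * y (k + 1) - 1 = 0

def pairSum (x : ℤ → ℝ) (k : ℤ) : ℝ := x k + x (k + 1)

def tripleSum (x : ℤ → ℝ) (k : ℤ) : ℝ := x k + x (k + 1) + x (k + 2)

noncomputable def tripleRatio (x y : ℤ → ℝ) (k : ℤ) : ℝ := tripleSum y k / tripleSum x k

noncomputable def symmetryChar (x : ℤ → ℝ) (k : ℤ) : ℝ :=
  x k * pairSum x (k - 1) * pairSum x k * (pairSum x (k + 1) - pairSum x (k - 2))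
    / (tripleSum x (k - 2) * tripleSum x (k - 1) * tripleSum x k)

lemma symmetryChar_eq (x : ℤ → ℝ) (k : ℤ) :
    symmetryChar x k = x k * (x (k - 1) + x k) * (x k + x (k + 1))
        * (x (k + 2) + x (k + 1) - x (k - 1) - x (k - 2))
      / ((x (k - 2) + x (k - 1) + x k) * (x (k - 1) + x k + x (k + 1))
        * (x k + x (k + 1) + x (k + 2))) := by
  unfold symmetryChar pairSum tripleSum
  ring_nf

lemma pairSum_sub_pairSum (x : ℤ → ℝ) (k : ℤ) :
    pairSum x (k + 1) - pairSum x (k - 2) = tripleSum x k - tripleSum x (k - 2) := by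
  unfold pairSum tripleSum
  ring_nf

lemma tripleSum_eq_mul_tripleRatio {x : ℤ → ℝ} (y : ℤ → ℝ) {k : ℤ}
    (hx : tripleSum x k ≠ 0) : tripleSum y k = tripleSum x k * tripleRatio x y k :=
  (mul_div_cancel₀ _ hx).symm

lemma tripleRatio_ne_zero {x y : ℤ → ℝ} {k : ℤ} (hx : tripleSum x k ≠ 0)
    (hy : tripleSum y k ≠ 0) : tripleRatio x y k ≠ 0 :=
  div_ne_zero hy hx

namespace Kj1Rows

variable {x y : ℤ → ℝ}

lemma mul_pairSum_eq_mul_pairSum (h : Kj1Rows x y) (k : ℤ) :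
    y k * pairSum x k = x (k + 2) * pairSum y (k + 1) := by
  unfold pairSum
  linear_combination (norm := ring_nf) h k - h (k + 1)

lemma eq_mul_tripleRatio (h : Kj1Rows x y) {k : ℤ} (hx : tripleSum x k ≠ 0) :
    y k = x (k + 2) * tripleRatio x y k := by
  rw [tripleRatio, mul_div_assoc', eq_div_iff hx]
  have hr := h.mul_pairSum_eq_mul_pairSum k
  simp only [pairSum, tripleSum] at hr ⊢
  linear_combination (norm := ring_nf) hr

lemma pairSum_eq_mul_tripleRatio (h : Kj1Rows x y) {k : ℤ} (hx : tripleSum x k ≠ 0) :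
    pairSum y (k + 1) = pairSum x k * tripleRatio x y k := by
  rw [tripleRatio, mul_div_assoc', eq_div_iff hx]
  have hr := h.mul_pairSum_eq_mul_pairSum k
  simp only [pairSum, tripleSum] at hr ⊢
  linear_combination (norm := ring_nf) -hr

lemma tripleRatio_recurrence (h : Kj1Rows x y) (hx : ∀ k, tripleSum x k ≠ 0) (k : ℤ) :
    x (k + 3) * tripleRatio x y (k + 1) + x (k + 4) * tripleRatio x y (k + 2)
      = pairSum x k * tripleRatio x y k := by
  have h₁ := h.eq_mul_tripleRatio (hx (k + 1))
  have h₂ := h.eq_mul_tripleRatio (hx (k + 2))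
  rw [← h.pairSum_eq_mul_tripleRatio (hx k), pairSum]
  linear_combination (norm := ring_nf) -h₁ - h₂

lemma symmetryChar_snd (h : Kj1Rows x y) (hx : ∀ k, tripleSum x k ≠ 0)
    (hy : ∀ k, tripleSum y k ≠ 0) (k : ℤ) :
    symmetryChar y k = x (k + 2) * pairSum x (k - 2) * pairSum x (k - 1)
        * (tripleSum y k - tripleSum y (k - 2))
      / (tripleSum x (k - 2) * tripleSum x (k - 1) * tripleSum x k) := by
  have h₁ := h.pairSum_eq_mul_tripleRatio (hx (k - 2))
  have h₂ := h.pairSum_eq_mul_tripleRatio (hx (k - 1))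
  rw [show k - 2 + 1 = k - 1 by ring] at h₁
  rw [sub_add_cancel] at h₂
  rw [symmetryChar, pairSum_sub_pairSum, h₁, h₂, h.eq_mul_tripleRatio (hx k),
    tripleSum_eq_mul_tripleRatio y (hx (k - 2)), tripleSum_eq_mul_tripleRatio y (hx (k - 1)),
    tripleSum_eq_mul_tripleRatio y (hx k)]
  field_simp [hx, tripleRatio_ne_zero (hx _) (hy _)]

lemma symmetryChar_linearized (h : Kj1Rows x y) (hx : ∀ k, tripleSum x k ≠ 0)
    (hy : ∀ k, tripleSum y k ≠ 0) (k : ℤ) :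
    symmetryChar x k * y k + symmetryChar y k * pairSum x k
      + symmetryChar x (k + 1) * pairSum y k + symmetryChar y (k + 1) * x (k + 1) = 0 := by
  have left_pair : symmetryChar x k * y k + symmetryChar y k * pairSum x k
      = pairSum x (k - 1) * pairSum x k / (tripleSum x (k - 1) * tripleSum x k) * x (k + 2)
        * ((x (k + 1) + x (k + 2)) * tripleRatio x y k
          - pairSum x (k - 2) * tripleRatio x y (k - 2)) := by
    rw [h.symmetryChar_snd hx hy, h.eq_mul_tripleRatio (hx k), symmetryChar,
      tripleSum_eq_mul_tripleRatio y (hx (k - 2)), tripleSum_eq_mul_tripleRatio y (hx k)]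
    field_simp [hx]
    unfold pairSum tripleSum
    ring_nf
  have right_pair : symmetryChar x (k + 1) * pairSum y k + symmetryChar y (k + 1) * x (k + 1)
      = pairSum x (k - 1) * pairSum x k / (tripleSum x (k - 1) * tripleSum x k) * x (k + 1)
        * ((x (k + 2) - pairSum x (k - 1)) * tripleRatio x y (k - 1)
          + x (k + 3) * tripleRatio x y (k + 1)) := by
    have ht := h.pairSum_eq_mul_tripleRatio (hx (k - 1))
    rw [sub_add_cancel] at ht
    rw [h.symmetryChar_snd hx hy, ht, symmetryChar, add_sub_cancel_right,
      show k + 1 - 2 = k - 1 by ring, show k + 1 + 1 = k + 2 by ring,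
      tripleSum_eq_mul_tripleRatio y (hx (k - 1)), tripleSum_eq_mul_tripleRatio y (hx (k + 1))]
    field_simp [hx]
    unfold pairSum tripleSum
    ring_nf
  set c := pairSum x (k - 1) * pairSum x k / (tripleSum x (k - 1) * tripleSum x k)
  linear_combination (norm := ring_nf) left_pair + right_pair
    + c * (x (k + 2) * h.tripleRatio_recurrence hx (k - 2)
      + x (k + 1) * h.tripleRatio_recurrence hx (k - 1))

end Kj1Rows

/-- The five-point symmetry characteristic (Carandini3) in the m-direction
is a generalized symmetry of (kj1): the linearized symmetry condition holds
identically on solutions. -/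
theorem kj1_symmetry_m_direction (w : ℤ → ℤ → ℝ) (hw : Kj1 w)
    (hne : ∀ n m : ℤ, w n m + w n (m+1) + w n (m+2) ≠ 0)
    (g : ℤ → ℤ → ℝ)
    (hg : ∀ n m : ℤ, g n m =
      w n m * (w n (m-1) + w n m) * (w n m + w n (m+1))
        * (w n (m+2) + w n (m+1) - w n (m-1) - w n (m-2))
        / ((w n (m-2) + w n (m-1) + w n m) * (w n (m-1) + w n m + w n (m+1))
            * (w n m + w n (m+1) + w n (m+2)))) :
    ∀ n m : ℤ,
      g n m * w (n+1) m + g (n+1) m * (w n m + w n (m+1))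
        + g n (m+1) * (w (n+1) m + w (n+1) (m+1))
        + g (n+1) (m+1) * w n (m+1) = 0 := by
  have hg' : ∀ n m, g n m = symmetryChar (w n) m := fun n m =>
    (hg n m).trans (symmetryChar_eq (w n) m).symm
  intro n m
  rw [hg', hg', hg', hg']
  exact Kj1Rows.symmetryChar_linearized (hw n) (hne n) (hne (n + 1)) m
end

section
/- Let w : ℝ × ℤ → ℝ, written w_n(ε), be differentiable in ε and satisfy the differential–difference equation (Carandini2): d/dε w_n = w_n (w_{n−1} w_n − 1)(w_n w_{n+1} − 1)(w_{n+2} w_{n+1} − w_{n−1} w_{n−2}) for all n ∈ ℤ and all ε ∈ ℝ. Define t_n(ε) := w_n(ε) w_{n+1}(ε) − 1. Then t satisfies the Bogoyavlensky-type lattice (Carandini7): d/dε t_n = t_n (t_n + 1)(t_{n+2} t_{n+1} − t_{n−1} t_{n−2}) for all n ∈ ℤ and all ε ∈ ℝ. -/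
/-! Along the flow (Carandini2) each factor of its right-hand side is a potential:
`w_{n-1} w_n - 1 = t_{n-1}`, `w_n w_{n+1} - 1 = t_n`, and the difference
`w_{n+2} w_{n+1} - w_{n-1} w_{n-2}` equals `t_{n+1} - t_{n-2}`. Hence
`w_n' = w_n t_{n-1} t_n (t_{n+1} - t_{n-2})`, and in the Leibniz rule
`t_n' = w_n' w_{n+1} + w_n w_{n+1}'` both terms carry the factor `w_n w_{n+1} t_n = (t_n + 1) t_n`,
leaving `t_{n-1} (t_{n+1} - t_{n-2}) + t_{n+1} (t_{n+2} - t_{n-1}) = t_{n+2} t_{n+1} - t_{n-1} t_{n-2}`. -/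

section Potentiation

variable {w t : ℝ → ℤ → ℝ}

lemma potential_of_pred (ht : ∀ (ε : ℝ) (n : ℤ), t ε n = w ε n * w ε (n+1) - 1)
    (ε : ℝ) (n : ℤ) : t ε (n-1) = w ε (n-1) * w ε n - 1 := by
  rw [ht, sub_add_cancel]

lemma deriv_potential (hdiff : ∀ n : ℤ, Differentiable ℝ (fun ε => w ε n))
    (ht : ∀ (ε : ℝ) (n : ℤ), t ε n = w ε n * w ε (n+1) - 1) (ε : ℝ) (n : ℤ) :
    deriv (fun ε => t ε n) ε =
      deriv (fun ε => w ε n) ε * w ε (n+1) + w ε n * deriv (fun ε => w ε (n+1)) ε := by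
  simp only [ht]
  rw [deriv_sub_const, deriv_fun_mul (hdiff n ε) (hdiff (n+1) ε)]

lemma carandini2_eq_potential
    (heq : ∀ (ε : ℝ) (n : ℤ),
      deriv (fun ε => w ε n) ε =
        w ε n * (w ε (n-1) * w ε n - 1) * (w ε n * w ε (n+1) - 1)
          * (w ε (n+2) * w ε (n+1) - w ε (n-1) * w ε (n-2)))
    (ht : ∀ (ε : ℝ) (n : ℤ), t ε n = w ε n * w ε (n+1) - 1) (ε : ℝ) (n : ℤ) :
    deriv (fun ε => w ε n) ε = w ε n * t ε (n-1) * t ε n * (t ε (n+1) - t ε (n-2)) := by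
  have h₁ : t ε (n+1) = w ε (n+2) * w ε (n+1) - 1 := by
    rw [ht, show n + 1 + 1 = n + 2 by ring, mul_comm]
  have h₂ : t ε (n-2) = w ε (n-1) * w ε (n-2) - 1 := by
    rw [show n - 2 = n - 1 - 1 by ring, potential_of_pred ht, mul_comm]
  rw [heq, ← potential_of_pred ht, ← ht, h₁, h₂]
  ring

end Potentiation

/-- Potentiation `t_n = w_n w_{n+1} - 1` maps the symmetry flow (Carandini2)
to the Bogoyavlensky-type lattice (Carandini7). -/
theorem carandini2_to_carandini7 (w : ℝ → ℤ → ℝ)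
    (hdiff : ∀ n : ℤ, Differentiable ℝ (fun ε => w ε n))
    (heq : ∀ (ε : ℝ) (n : ℤ),
      deriv (fun ε => w ε n) ε =
        w ε n * (w ε (n-1) * w ε n - 1) * (w ε n * w ε (n+1) - 1)
          * (w ε (n+2) * w ε (n+1) - w ε (n-1) * w ε (n-2)))
    (t : ℝ → ℤ → ℝ)
    (ht : ∀ (ε : ℝ) (n : ℤ), t ε n = w ε n * w ε (n+1) - 1) :
    ∀ (ε : ℝ) (n : ℤ),
      deriv (fun ε => t ε n) ε =
        t ε n * (t ε n + 1) * (t ε (n+2) * t ε (n+1) - t ε (n-1) * t ε (n-2)) := by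
  intro ε n
  rw [deriv_potential hdiff ht, carandini2_eq_potential heq ht, carandini2_eq_potential heq ht,
    add_sub_cancel_right, show n + 1 - 2 = n - 1 by ring, show n + 1 + 1 = n + 2 by ring]
  linear_combination
    -t ε n * (t ε (n-1) * (t ε (n+1) - t ε (n-2)) + t ε (n+1) * (t ε (n+2) - t ε (n-1))) * ht ε n
end

section
/- Let w : ℝ × ℤ → ℝ, written w_m(ε̃), be differentiable in ε̃, satisfy w_m + w_{m+1} + w_{m+2} ≠ 0 for all m ∈ ℤ and all ε̃ ∈ ℝ, and satisfy the differential–difference equation (Carandini3): d/dε̃ w_m = w_m (w_{m−1} + w_m)(w_m + w_{m+1})(w_{m+2} + w_{m+1} − w_{m−1} − w_{m−2}) / [ (w_{m−2} + w_{m−1} + w_m)(w_{m−1} + w_m + w_{m+1})(w_m + w_{m+1} + w_{m+2}) ] for all m ∈ ℤ and all ε̃ ∈ ℝ. Define t̃_m(ε̃) := −(w_{m+2} + w_{m+1}) / (w_m + w_{m+2} + w_{m+1}). Then t̃ satisfies the Bogoyavlensky lattice (C4): d/dε̃ t̃_m = t̃_m (t̃_m + 1)(t̃_{m+2} t̃_{m+1}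 − t̃_{m−1} t̃_{m−2}) for all m ∈ ℤ and all ε̃ ∈ ℝ. -/
/-!
Write `S_m = w_m + w_{m+1} + w_{m+2}`. Then `t̃_m = -(w_{m+1} + w_{m+2}) / S_m` and
`t̃_m + 1 = w_m / S_m`, so by the quotient rule
`d t̃_m = ((w_{m+1} + w_{m+2}) ẇ_m - w_m (ẇ_{m+1} + ẇ_{m+2})) / S_m²`.
Substituting (Carandini3) for `ẇ_m, ẇ_{m+1}, ẇ_{m+2}` turns this into a rational identity in the
seven values `w_{m-2}, …, w_{m+4}` whose only denominators are `S_{m-2}, …, S_{m+2}`; treating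
these five sums as independent atoms, clearing them leaves a polynomial identity.
-/

section

variable {K : Type*} [Field K]

/-- The right-hand side of (Carandini3) at a site `z` with neighbours `x, y` on the left and
`p, q` on the right. -/
def carandiniTerm (x y z p q : K) : K :=
  z * (y + z) * (z + p) * (q + p - y - x) / ((x + y + z) * (y + z + p) * (z + p + q))

/-- The substitution (C3a), `t̃_m = miuraTerm w_m w_{m+1} w_{m+2}`. -/
def miuraTerm (x y z : K) : K := -(z + y) / (x + z + y)

theorem miuraTerm_eq_neg_div (x y z : K) : miuraTerm x y z = -(y + z) / (x + y + z) := by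
  unfold miuraTerm
  ring_nf

theorem miuraTerm_add_one {x y z : K} (h : x + y + z ≠ 0) :
    miuraTerm x y z + 1 = x / (x + y + z) := by
  rw [miuraTerm_eq_neg_div]
  field_simp
  ring

theorem miuraTerm_bogoyavlensky (a b c d e f g : K) (h₁ : a + b + c ≠ 0) (h₂ : b + c + d ≠ 0)
    (h₃ : c + d + e ≠ 0) (h₄ : d + e + f ≠ 0) (h₅ : e + f + g ≠ 0) :
    miuraTerm c d e * (miuraTerm c d e + 1) *
        (miuraTerm e f g * miuraTerm d e f - miuraTerm b c d * miuraTerm a b c) =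
      ((d + e) * carandiniTerm a b c d e
          - c * (carandiniTerm b c d e f + carandiniTerm c d e f g)) / (c + d + e) ^ 2 := by
  rw [miuraTerm_add_one h₃]
  simp only [miuraTerm_eq_neg_div, carandiniTerm]
  generalize hs₁ : a + b + c = s₁ at *
  generalize hs₂ : b + c + d = s₂ at *
  generalize hs₃ : c + d + e = s₃ at *
  generalize hs₄ : d + e + f = s₄ at *
  generalize hs₅ : e + f + g = s₅ at *
  field_simp
  subst hs₁ hs₂ hs₃ hs₄ hs₅
  ring

def carandiniVelocity (u : ℤ → K) (m : ℤ) : K :=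
  carandiniTerm (u (m - 2)) (u (m - 1)) (u m) (u (m + 1)) (u (m + 2))

def miuraMap (u : ℤ → K) (m : ℤ) : K := miuraTerm (u m) (u (m + 1)) (u (m + 2))

def bogoyavlenskyVelocity (s : ℤ → K) (m : ℤ) : K :=
  s m * (s m + 1) * (s (m + 2) * s (m + 1) - s (m - 1) * s (m - 2))

theorem bogoyavlenskyVelocity_miuraMap (u : ℤ → K) (hu : ∀ k, u k + u (k + 1) + u (k + 2) ≠ 0)
    (m : ℤ) :
    bogoyavlenskyVelocity (miuraMap u) m =
      ((u (m + 1) + u (m + 2)) * carandiniVelocity u m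
          - u m * (carandiniVelocity u (m + 1) + carandiniVelocity u (m + 2)))
        / (u m + u (m + 1) + u (m + 2)) ^ 2 := by
  have h₁ := hu (m - 2)
  have h₂ := hu (m - 1)
  have h₄ := hu (m + 1)
  have h₅ := hu (m + 2)
  -- bring every index `m ± i ± j` to the form `m ± k`
  simp only [bogoyavlenskyVelocity, miuraMap, carandiniVelocity, Int.add_assoc, Int.add_sub_assoc,
    sub_add_eq_add_sub (α := ℤ), Int.reduceAdd, Int.reduceSub, Int.add_zero,
    ← Int.sub_eq_add_neg] at h₁ h₂ h₄ h₅ ⊢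
  exact miuraTerm_bogoyavlensky _ _ _ _ _ _ _ h₁ h₂ (hu m) h₄ h₅

end

theorem HasDerivAt.miuraTerm {𝕜 : Type*} [NontriviallyNormedField 𝕜] {x y z : 𝕜 → 𝕜}
    {x' y' z' ε : 𝕜} (hx : HasDerivAt x x' ε) (hy : HasDerivAt y y' ε) (hz : HasDerivAt z z' ε)
    (h : x ε + y ε + z ε ≠ 0) :
    HasDerivAt (fun ε => miuraTerm (x ε) (y ε) (z ε))
      (((y ε + z ε) * x' - x ε * (y' + z')) / (x ε + y ε + z ε) ^ 2) ε := by
  have h' : x ε + z ε + y ε ≠ 0 := by rwa [add_right_comm]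
  refine ((hz.add hy).neg.div ((hx.add hz).add hy) h').congr_deriv ?_
  simp only [Pi.add_apply, Pi.neg_apply, add_right_comm (x ε) (z ε)]
  ring

/-- The transformation (C3a), `t̃_m = -(w_{m+2}+w_{m+1})/(w_m+w_{m+2}+w_{m+1})`,
maps the symmetry flow (Carandini3) to the Bogoyavlensky lattice (C4). -/
theorem carandini3_to_bogoyavlensky (w : ℝ → ℤ → ℝ)
    (hdiff : ∀ m : ℤ, Differentiable ℝ (fun ε => w ε m))
    (hne : ∀ (ε : ℝ) (m : ℤ), w ε m + w ε (m+1) + w ε (m+2) ≠ 0)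
    (heq : ∀ (ε : ℝ) (m : ℤ),
      deriv (fun ε => w ε m) ε =
        w ε m * (w ε (m-1) + w ε m) * (w ε m + w ε (m+1))
          * (w ε (m+2) + w ε (m+1) - w ε (m-1) - w ε (m-2))
          / ((w ε (m-2) + w ε (m-1) + w ε m) * (w ε (m-1) + w ε m + w ε (m+1))
              * (w ε m + w ε (m+1) + w ε (m+2))))
    (t : ℝ → ℤ → ℝ)
    (ht : ∀ (ε : ℝ) (m : ℤ),
      t ε m = -(w ε (m+2) + w ε (m+1)) / (w ε m + w ε (m+2) + w ε (m+1))) :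
    ∀ (ε : ℝ) (m : ℤ),
      deriv (fun ε => t ε m) ε =
        t ε m * (t ε m + 1) * (t ε (m+2) * t ε (m+1) - t ε (m-1) * t ε (m-2)) := by
  obtain rfl : t = fun ε => miuraMap (w ε) := funext fun ε => funext (ht ε)
  intro ε m
  have hw (k : ℤ) : HasDerivAt (fun ε => w ε k) (carandiniVelocity (w ε) k) ε :=
    (hdiff k ε).hasDerivAt.congr_deriv (heq ε k)
  exact ((hw m).miuraTerm (hw (m + 1)) (hw (m + 2)) (hne ε m)).deriv.trans
    (bogoyavlenskyVelocity_miuraMap (w ε) (hne ε) m).symm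
end

section
/- Let w : ℤ² → ℝ satisfy equation (kj1): w_{n,m} w_{n+1,m} + w_{n+1,m} w_{n,m+1} + w_{n,m+1} w_{n+1,m+1} − 1 = 0 for all (n,m) ∈ ℤ², with w_{n,m} ≠ 0 for all (n,m). Define t_{n,m} := w_{n,m} w_{n+1,m} − 1. Then t satisfies equation (Carandini6): (t_{n+1,m+1} + t_{n+1,m} + 1)(t_{n,m+1} + t_{n,m} + 1) − (t_{n+1,m} + 1)(t_{n,m+1} + 1) = 0 for all (n,m) ∈ ℤ². -/
/-- Equation (Carandini6) for a field `t : ℤ² → ℝ`. -/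
def Carandini6 (t : ℤ → ℤ → ℝ) : Prop :=
  ∀ n m : ℤ,
    (t (n+1) (m+1) + t (n+1) m + 1) * (t n (m+1) + t n m + 1)
      - (t (n+1) m + 1) * (t n (m+1) + 1) = 0

/-! Equation (kj1) at `(n, m)` says that `t_{n,m+1} + t_{n,m} + 1 = -w_{n+1,m} w_{n,m+1}`; the
product of this factorization at `(n, m)` and at `(n + 1, m)` is `(t_{n+1,m} + 1)(t_{n,m+1} + 1)`. -/

theorem Kj1.potential_add_add_one {w : ℤ → ℤ → ℝ} (hw : Kj1 w) {t : ℤ → ℤ → ℝ}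
    (ht : ∀ n m : ℤ, t n m = w n m * w (n+1) m - 1) (n m : ℤ) :
    t n (m+1) + t n m + 1 = -(w (n+1) m * w n (m+1)) := by
  rw [ht, ht]
  linear_combination hw n m

theorem kj1_to_carandini6_general (w : ℤ → ℤ → ℝ) (hw : Kj1 w)
    (t : ℤ → ℤ → ℝ)
    (ht : ∀ n m : ℤ, t n m = w n m * w (n+1) m - 1) :
    Carandini6 t := by
  intro n m
  rw [hw.potential_add_add_one ht (n+1) m, hw.potential_add_add_one ht n m, ht (n+1) m,
    ht n (m+1)]
  ring

/-- The potentiation `t_{n,m} = w_{n,m} w_{n+1,m} - 1` maps solutions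
of (kj1) to solutions of (Carandini6). -/
theorem kj1_to_carandini6 (w : ℤ → ℤ → ℝ) (hw : Kj1 w)
    (hw0 : ∀ n m : ℤ, w n m ≠ 0)
    (t : ℤ → ℤ → ℝ)
    (ht : ∀ n m : ℤ, t n m = w n m * w (n+1) m - 1) :
    Carandini6 t :=
  kj1_to_carandini6_general w hw t ht
end

section
/- Let w : ℤ² → ℝ satisfy equation (kj1): w_{n,m} w_{n+1,m} + w_{n+1,m} w_{n,m+1} + w_{n,m+1} w_{n+1,m+1} − 1 = 0 for all (n,m) ∈ ℤ², with w_{n,m} ≠ 0 and w_{n,m} + w_{n,m+1} + w_{n,m+2} ≠ 0 for all (n,m). Define t̃_{n,m} := −(w_{n,m+2} + w_{n,m+1})/(w_{n,m} + w_{n,m+2} + w_{n,m+1}). Then t̃_{n,m} + 1 ≠ 0 for all (n,m), and the following Miura-transformation identities hold for all (n,m) ∈ ℤ²: (Amor1) w_{n,m+1} = −((t̃_{n+1,m} + t̃_{n,m} + 1)/(t̃_{n,m} + 1))·w_{n,m}; (Amor2) w_{n,m+2} = ((t̃_{n+1,m} + 1)/(t̃_{n,m} + 1))·w_{n,m}; and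 (Amor3) the quantity D_{n,m} := t̃_{n+2,m} t̃_{n+1,m} + (t̃_{n,m} + 1)(t̃_{n+2,m} + t̃_{n+1,m} + 1) is nonzero and w_{n+1,m} = (t̃_{n,m} + 1)(t̃_{n+1,m} + 1) / (D_{n,m}·w_{n,m}). -/
/-- The transformation (C3a). -/
noncomputable def c3a (w : ℤ → ℤ → ℝ) (n m : ℤ) : ℝ :=
  -(w n (m+2) + w n (m+1)) / (w n m + w n (m+2) + w n (m+1))

/-- The denominator `D n m` of (Amor3). -/
def amorDenom (t : ℤ → ℤ → ℝ) (n m : ℤ) : ℝ :=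
  t (n+2) m * t (n+1) m + (t n m + 1) * (t (n+2) m + t (n+1) m + 1)

section

variable {w : ℤ → ℤ → ℝ}

theorem c3a_add_one {n m : ℤ} (hS : w n m + w n (m+1) + w n (m+2) ≠ 0) :
    c3a w n m + 1 = w n m / (w n m + w n (m+1) + w n (m+2)) := by
  unfold c3a
  field_simp [show w n m + w n (m+2) + w n (m+1) ≠ 0 by contrapose! hS; linarith]
  ring

theorem c3a_eq_div_sub_one {n m : ℤ} (hS : w n m + w n (m+1) + w n (m+2) ≠ 0) :
    c3a w n m = w n m / (w n m + w n (m+1) + w n (m+2)) - 1 := by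
  rw [← c3a_add_one hS, add_sub_cancel_right]

theorem c3a_add_one_ne_zero {n m : ℤ} (hw0 : w n m ≠ 0)
    (hS : w n m + w n (m+1) + w n (m+2) ≠ 0) : c3a w n m + 1 ≠ 0 := by
  rw [c3a_add_one hS]
  exact div_ne_zero hw0 hS

theorem Kj1.succ_snd (hw : Kj1 w) (n m : ℤ) :
    w n (m+1) * w (n+1) (m+1) + w (n+1) (m+1) * w n (m+2)
      + w n (m+2) * w (n+1) (m+2) - 1 = 0 := by
  simpa only [add_assoc, one_add_one_eq_two] using hw n (m+1)

theorem Kj1.conservation (hw : Kj1 w) (n m : ℤ) :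
    w n (m+2) * (w (n+1) (m+1) + w (n+1) (m+2)) = w (n+1) m * (w n m + w n (m+1)) := by
  linear_combination hw.succ_snd n m - hw n m

theorem Kj1.amor1 (hw : Kj1 w) (hw0 : ∀ n m, w n m ≠ 0)
    (hne : ∀ n m, w n m + w n (m+1) + w n (m+2) ≠ 0) (n m : ℤ) :
    w n (m+1) = -((c3a w (n+1) m + c3a w n m + 1) / (c3a w n m + 1)) * w n m := by
  rw [add_assoc, c3a_add_one (hne n m), c3a_eq_div_sub_one (hne (n+1) m)]
  field_simp [hne n m, hne (n+1) m, hw0 n m]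
  linear_combination -hw.conservation n m

theorem Kj1.amor2 (hw : Kj1 w) (hw0 : ∀ n m, w n m ≠ 0)
    (hne : ∀ n m, w n m + w n (m+1) + w n (m+2) ≠ 0) (n m : ℤ) :
    w n (m+2) = ((c3a w (n+1) m + 1) / (c3a w n m + 1)) * w n m := by
  rw [c3a_add_one (hne n m), c3a_add_one (hne (n+1) m)]
  field_simp [hne n m, hne (n+1) m, hw0 n m]
  linear_combination hw.conservation n m

theorem Kj1.amorDenom_mul_sums_eq_one (hw : Kj1 w)
    (hne : ∀ n m, w n m + w n (m+1) + w n (m+2) ≠ 0) (n m : ℤ) :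
    amorDenom (c3a w) n m
      * ((w n m + w n (m+1) + w n (m+2)) * (w (n+1) m + w (n+1) (m+1) + w (n+1) (m+2)))
      = 1 := by
  have h₁ := hw (n+1) m
  have h₂ := hw.succ_snd (n+1) m
  rw [add_assoc n 1 1, one_add_one_eq_two] at h₁ h₂
  unfold amorDenom
  rw [c3a_eq_div_sub_one (hne n m), c3a_eq_div_sub_one (hne (n+1) m),
    c3a_eq_div_sub_one (hne (n+2) m)]
  field_simp [hne n m, hne (n+1) m, hne (n+2) m]
  linear_combination w (n+2) m * hw n m + (w (n+2) (m+1) + w (n+2) (m+2)) * hw.succ_snd n m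
    - w n (m+1) * h₁ + w n (m+1) * h₂

theorem Kj1.amor3 (hw : Kj1 w) (hw0 : ∀ n m, w n m ≠ 0)
    (hne : ∀ n m, w n m + w n (m+1) + w n (m+2) ≠ 0) (n m : ℤ) :
    amorDenom (c3a w) n m ≠ 0 ∧
      w (n+1) m = (c3a w n m + 1) * (c3a w (n+1) m + 1) / (amorDenom (c3a w) n m * w n m) := by
  have hD := hw.amorDenom_mul_sums_eq_one hne n m
  refine ⟨left_ne_zero_of_mul_eq_one hD, ?_⟩
  rw [eq_inv_of_mul_eq_one_left hD, c3a_add_one (hne n m), c3a_add_one (hne (n+1) m)]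
  field_simp [hne n m, hne (n+1) m, hw0 n m]

end

/-- Theorem 3 (first part): the Miura-transformation identities
(Amor1), (Amor2), (Amor3) for the transformation (C3a) of (kj1). -/
theorem kj1_amor_identities (w : ℤ → ℤ → ℝ) (hw : Kj1 w)
    (hw0 : ∀ n m : ℤ, w n m ≠ 0)
    (hne : ∀ n m : ℤ, w n m + w n (m+1) + w n (m+2) ≠ 0)
    (t : ℤ → ℤ → ℝ)
    (ht : ∀ n m : ℤ,
      t n m = -(w n (m+2) + w n (m+1)) / (w n m + w n (m+2) + w n (m+1))) :
    (∀ n m : ℤ, t n m + 1 ≠ 0) ∧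
    (∀ n m : ℤ, w n (m+1) = -((t (n+1) m + t n m + 1) / (t n m + 1)) * w n m) ∧
    (∀ n m : ℤ, w n (m+2) = ((t (n+1) m + 1) / (t n m + 1)) * w n m) ∧
    (∀ n m : ℤ,
      t (n+2) m * t (n+1) m + (t n m + 1) * (t (n+2) m + t (n+1) m + 1) ≠ 0 ∧
      w (n+1) m = (t n m + 1) * (t (n+1) m + 1)
        / ((t (n+2) m * t (n+1) m + (t n m + 1) * (t (n+2) m + t (n+1) m + 1))
            * w n m)) := by
  obtain rfl : t = c3a w := funext fun n => funext (ht n)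
  exact ⟨fun n m => c3a_add_one_ne_zero (hw0 n m) (hne n m), hw.amor1 hw0 hne,
    hw.amor2 hw0 hne, hw.amor3 hw0 hne⟩
end

section
/- Let w : ℤ² → ℝ satisfy equation (kj1): w_{n,m} w_{n+1,m} + w_{n+1,m} w_{n,m+1} + w_{n,m+1} w_{n+1,m+1} − 1 = 0 for all (n,m) ∈ ℤ², with w_{n,m} ≠ 0 and w_{n,m} + w_{n,m+1} + w_{n,m+2} ≠ 0 for all (n,m). Define t̃_{n,m} := −(w_{n,m+2} + w_{n,m+1})/(w_{n,m} + w_{n,m+2} + w_{n,m+1}). Then t̃ satisfies equation (Romulus4): (t̃_{n+1,m+1} + t̃_{n,m+1} + 1)(t̃_{n+1,m} + t̃_{n,m} + 1) − (t̃_{n+1,m} + 1)(t̃_{n,m+1} + 1) = 0 for all (n,m) ∈ ℤ². -/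
/-- Equation (Romulus4) for a field `t : ℤ² → ℝ`. -/
def Romulus4 (t : ℤ → ℤ → ℝ) : Prop :=
  ∀ n m : ℤ,
    (t (n+1) (m+1) + t n (m+1) + 1) * (t (n+1) m + t n m + 1)
      - (t (n+1) m + 1) * (t n (m+1) + 1) = 0

/-!
With `S = triSum w`, the substitution (C3a) reads `t n m + 1 = w n m / S n m`.
Subtracting (kj1) at `(n, m)` from (kj1) at `(n, m+1)` gives
`w n (m+2) * S (n+1) m = w (n+1) m * S n m`, i.e. `t (n+1) m + 1 = w n (m+2) / S n m`.
Hence every entry of (Romulus4) at `(n, m)` is a ratio of values on the column `n`, and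
(Romulus4) becomes an identity between four consecutive values `w n m, …, w n (m+3)`.
-/

def triSum (w : ℤ → ℤ → ℝ) (n m : ℤ) : ℝ := w n m + w n (m+1) + w n (m+2)

lemma triSum_succ (w : ℤ → ℤ → ℝ) (n m : ℤ) :
    triSum w n (m+1) = w n (m+1) + w n (m+2) + w n (m+3) := by
  simp only [triSum, show m + 1 + 1 = m + 2 by ring, show m + 1 + 2 = m + 3 by ring]

lemma Kj1.mul_triSum_succ_eq {w : ℤ → ℤ → ℝ} (hw : Kj1 w) (n m : ℤ) :
    w n (m+2) * triSum w (n+1) m = w (n+1) m * triSum w n m := by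
  have h := hw n (m+1)
  rw [show m + 1 + 1 = m + 2 by ring] at h
  unfold triSum
  linear_combination h - hw n m

lemma Kj1.div_triSum_succ_eq {w : ℤ → ℤ → ℝ} (hw : Kj1 w)
    (hS : ∀ n m, triSum w n m ≠ 0) (n m : ℤ) :
    w (n+1) m / triSum w (n+1) m = w n (m+2) / triSum w n m := by
  rw [div_eq_div_iff (hS _ _) (hS _ _)]
  linear_combination -hw.mul_triSum_succ_eq n m

lemma eq_div_triSum_sub_one {w t : ℤ → ℤ → ℝ}
    (ht : ∀ n m, t n m = -(w n (m+2) + w n (m+1)) / (w n m + w n (m+2) + w n (m+1)))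
    (hS : ∀ n m, triSum w n m ≠ 0) (n m : ℤ) :
    t n m = w n m / triSum w n m - 1 := by
  have hden : w n m + w n (m+2) + w n (m+1) = triSum w n m := by unfold triSum; ring
  rw [ht, hden, eq_sub_iff_add_eq, div_add_one (hS n m)]
  unfold triSum
  ring

theorem kj1_to_romulus4_general (w : ℤ → ℤ → ℝ) (hw : Kj1 w)
    (hne : ∀ n m : ℤ, w n m + w n (m+1) + w n (m+2) ≠ 0)
    (t : ℤ → ℤ → ℝ)
    (ht : ∀ n m : ℤ,
      t n m = -(w n (m+2) + w n (m+1)) / (w n m + w n (m+2) + w n (m+1))) :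
    Romulus4 t := by
  intro n m
  have hS : ∀ n m, triSum w n m ≠ 0 := hne
  have hS₀ := hS n m
  have hS₁ := hS n (m+1)
  simp only [eq_div_triSum_sub_one ht hS, hw.div_triSum_succ_eq hS,
    show m + 1 + 2 = m + 3 by ring]
  rw [triSum_succ] at hS₁ ⊢
  unfold triSum at hS₀ ⊢
  field_simp
  ring

/-- The transformation (C3a) maps solutions of (kj1) to solutions of
(Romulus4). -/
theorem kj1_to_romulus4 (w : ℤ → ℤ → ℝ) (hw : Kj1 w)
    (hw0 : ∀ n m : ℤ, w n m ≠ 0)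
    (hne : ∀ n m : ℤ, w n m + w n (m+1) + w n (m+2) ≠ 0)
    (t : ℤ → ℤ → ℝ)
    (ht : ∀ n m : ℤ,
      t n m = -(w n (m+2) + w n (m+1)) / (w n m + w n (m+2) + w n (m+1))) :
    Romulus4 t :=
  kj1_to_romulus4_general w hw hne t ht
end

section
/- Let t : ℤ² → ℝ satisfy equation (Carandini6): (t_{n+1,m+1} + t_{n+1,m} + 1)(t_{n,m+1} + t_{n,m} + 1) − (t_{n+1,m} + 1)(t_{n,m+1} + 1) = 0 for all (n,m) ∈ ℤ², and let w : ℤ² → ℝ satisfy w_{n,m} ≠ 0 and w_{n,m} w_{n+1,m} = t_{n,m} + 1 for all (n,m) ∈ ℤ². Define E_{n,m} := w_{n,m} w_{n+1,m} + w_{n+1,m} w_{n,m+1} + w_{n,m+1} w_{n+1,m+1} − 1 and α_{n,m} := E_{n,m}/(w_{n+1,m} w_{n,m+1}). Then for all (n,m) ∈ ℤ²: α_{n,m} + α_{n+1,m} − α_{n,m}·α_{n+1,m} = 0. -/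
theorem add_sub_mul_eq_zero_of_one_sub_mul_one_sub_eq_one {R : Type*} [CommRing R] {x y : R}
    (h : (1 - x) * (1 - y) = 1) : x + y - x * y = 0 := by
  linear_combination -h

section

variable {t w E α : ℤ → ℤ → ℝ}

theorem one_sub_alpha_eq (hw0 : ∀ n m : ℤ, w n m ≠ 0)
    (hSat : ∀ n m : ℤ, w n m * w (n+1) m = t n m + 1)
    (hE : ∀ n m : ℤ, E n m =
      w n m * w (n+1) m + w (n+1) m * w n (m+1) + w n (m+1) * w (n+1) (m+1) - 1)
    (hα : ∀ n m : ℤ, α n m = E n m / (w (n+1) m * w n (m+1))) (n m : ℤ) :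
    1 - α n m = -(t n (m+1) + t n m + 1) / (w (n+1) m * w n (m+1)) := by
  have hden : w (n+1) m * w n (m+1) ≠ 0 := mul_ne_zero (hw0 _ _) (hw0 _ _)
  rw [hα, hE, eq_div_iff hden, sub_mul, div_mul_cancel₀ _ hden]
  linear_combination -hSat n m - hSat n (m+1)

end

/-- If `t` satisfies (Carandini6) and `w` is defined by (Saturnus), then the
quantity `α_{n,m} = E_{n,m}/(w_{n+1,m} w_{n,m+1})` satisfies equation
(Carandini8a): `α_{n,m} + α_{n+1,m} - α_{n,m} α_{n+1,m} = 0`. -/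
theorem carandini6_alpha_relation (t : ℤ → ℤ → ℝ) (hT : Carandini6 t)
    (w : ℤ → ℤ → ℝ) (hw0 : ∀ n m : ℤ, w n m ≠ 0)
    (hSat : ∀ n m : ℤ, w n m * w (n+1) m = t n m + 1)
    (E : ℤ → ℤ → ℝ)
    (hE : ∀ n m : ℤ, E n m =
      w n m * w (n+1) m + w (n+1) m * w n (m+1)
        + w n (m+1) * w (n+1) (m+1) - 1)
    (α : ℤ → ℤ → ℝ)
    (hα : ∀ n m : ℤ, α n m = E n m / (w (n+1) m * w n (m+1))) :
    ∀ n m : ℤ, α n m + α (n+1) m - α n m * α (n+1) m = 0 := by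
  intro n m
  apply add_sub_mul_eq_zero_of_one_sub_mul_one_sub_eq_one
  have hden : w (n+1) m * w n (m+1) * (w (n+1+1) m * w (n+1) (m+1))
      = (t (n+1) m + 1) * (t n (m+1) + 1) := by
    rw [← hSat (n+1) m, ← hSat n (m+1)]
    ring
  have hden0 : (t (n+1) m + 1) * (t n (m+1) + 1) ≠ 0 := by
    rw [← hden]
    exact mul_ne_zero (mul_ne_zero (hw0 _ _) (hw0 _ _)) (mul_ne_zero (hw0 _ _) (hw0 _ _))
  rw [one_sub_alpha_eq hw0 hSat hE hα, one_sub_alpha_eq hw0 hSat hE hα, neg_div, neg_div,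
    neg_mul_neg, div_mul_div_comm, hden, div_eq_one_iff_eq hden0]
  linear_combination hT n m
end

section
/- Let t : ℤ² → ℝ satisfy equation (Carandini6): (t_{n+1,m+1} + t_{n+1,m} + 1)(t_{n,m+1} + t_{n,m} + 1) − (t_{n+1,m} + 1)(t_{n,m+1} + 1) = 0 for all (n,m) ∈ ℤ², and let w : ℤ² → ℝ satisfy w_{n,m} ≠ 0 and w_{n,m} w_{n+1,m} = t_{n,m} + 1 for all (n,m) ∈ ℤ². Assume moreover that E_{n,m} := w_{n,m} w_{n+1,m} + w_{n+1,m} w_{n,m+1} + w_{n,m+1} w_{n+1,m+1} − 1 is nonzero for all (n,m) ∈ ℤ². Then there exists a function γ : ℤ → ℝ (depending only on m) with γ_m ≠ 1 and γ_m ≠ −1 for all m, such that w satisfies the non-autonomous equation (Carandini8): w_{n,m} w_{n+1,m} + w_{n+1,m} w_{n,m+1}·(1 − 2/(γ_m·(−1)^n + 1)) + w_{n,m+1} w_{n+1,m+1} − 1 = 0 for all (n,m) ∈ ℤ². -/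
/-!
Write `E n m` for the left-hand side of (kj1) and `G n m := w (n+1) m * w n (m+1) / E n m`.
After the substitution (Saturnus), (Carandini6) at `(n, m)` says exactly
`G n m + G (n+1) m = 1`, so `2 G - 1` alternates in sign along `n`:
`2 G n m = γ m (-1)^n + 1` with `γ m = 2 G 0 m - 1`. Then the coefficient
`1 - 2 / (γ m (-1)^n + 1) = 1 - E n m / (w (n+1) m * w n (m+1))` makes the left side of
(Carandini8) equal to `E n m - E n m = 0`, and `G ≠ 0` everywhere rules out `γ m = ±1`.
-/

theorem eq_zpow_mul_of_forall_add_one_eq_mul {K : Type*} [Field K] {a : K} (ha : a ≠ 0)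
    {f : ℤ → K} (hf : ∀ n, f (n + 1) = a * f n) (n : ℤ) : f n = a ^ n * f 0 := by
  induction n using Int.induction_on with
  | zero => simp
  | succ k ih => rw [hf, ih, zpow_add_one₀ ha]; ring
  | pred k ih =>
    rw [← mul_right_inj' ha, ← hf, sub_add_cancel, ih, zpow_sub_one₀ ha]
    field_simp

noncomputable def kj1Defect (w : ℤ → ℤ → ℝ) (n m : ℤ) : ℝ :=
  w n m * w (n+1) m + w (n+1) m * w n (m+1) + w n (m+1) * w (n+1) (m+1) - 1

noncomputable def crossTermRatio (w : ℤ → ℤ → ℝ) (n m : ℤ) : ℝ :=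
  w (n+1) m * w n (m+1) / kj1Defect w n m

theorem crossTermRatio_add_crossTermRatio_add_one {t w : ℤ → ℤ → ℝ} (hT : Carandini6 t)
    (hSat : ∀ n m : ℤ, w n m * w (n+1) m = t n m + 1) (hE : ∀ n m, kj1Defect w n m ≠ 0)
    (n m : ℤ) : crossTermRatio w n m + crossTermRatio w (n+1) m = 1 := by
  have ht : ∀ n m, t n m = w n m * w (n+1) m - 1 := fun n m => eq_sub_of_add_eq (hSat n m).symm
  have h := hT n m
  simp only [ht] at h
  rw [crossTermRatio, crossTermRatio, div_add_div _ _ (hE n m) (hE (n+1) m),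
    div_eq_one_iff_eq (mul_ne_zero (hE n m) (hE (n+1) m))]
  unfold kj1Defect
  linear_combination -h

theorem kj1_deformed_by_crossTermRatio_eq_zero {w : ℤ → ℤ → ℝ} {n m : ℤ}
    (hw : w (n+1) m * w n (m+1) ≠ 0) :
    w n m * w (n+1) m + w (n+1) m * w n (m+1) * (1 - 2 / (2 * crossTermRatio w n m))
      + w n (m+1) * w (n+1) (m+1) - 1 = 0 := by
  rw [crossTermRatio, div_mul_cancel_left₀ two_ne_zero, inv_div, mul_sub, mul_one,
    mul_div_cancel₀ _ hw, kj1Defect]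
  ring

/-- Theorem 3 of the paper: if `t` satisfies (Carandini6), `w` is defined by
(Saturnus), and (kj1) is nowhere satisfied exactly (`E ≠ 0`), then `w`
satisfies the non-autonomous equation (Carandini8) for some function `γ_m`. -/
theorem carandini6_to_carandini8 (t : ℤ → ℤ → ℝ) (hT : Carandini6 t)
    (w : ℤ → ℤ → ℝ) (hw0 : ∀ n m : ℤ, w n m ≠ 0)
    (hSat : ∀ n m : ℤ, w n m * w (n+1) m = t n m + 1)
    (hE : ∀ n m : ℤ,
      w n m * w (n+1) m + w (n+1) m * w n (m+1)
        + w n (m+1) * w (n+1) (m+1) - 1 ≠ 0) :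
    ∃ γ : ℤ → ℝ, (∀ m : ℤ, γ m ≠ 1 ∧ γ m ≠ -1) ∧
      ∀ n m : ℤ,
        w n m * w (n+1) m
          + w (n+1) m * w n (m+1) * (1 - 2 / (γ m * (-1 : ℝ) ^ n + 1))
          + w n (m+1) * w (n+1) (m+1) - 1 = 0 := by
  set G := crossTermRatio w
  have hcross : ∀ n m, w (n+1) m * w n (m+1) ≠ 0 := fun n m => mul_ne_zero (hw0 _ _) (hw0 _ _)
  have hG : ∀ n m, G n m ≠ 0 := fun n m => div_ne_zero (hcross n m) (hE n m)
  have hG_alternates : ∀ n m, 2 * G n m = (2 * G 0 m - 1) * (-1 : ℝ) ^ n + 1 := fun n m => by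
    have := eq_zpow_mul_of_forall_add_one_eq_mul (a := (-1 : ℝ)) (f := fun n => 2 * G n m - 1)
      (by norm_num) (fun n => by linarith [crossTermRatio_add_crossTermRatio_add_one hT hSat hE n m]) n
    linear_combination this
  refine ⟨fun m => 2 * G 0 m - 1, fun m => ⟨fun h => hG 1 m ?_, fun h => hG 0 m ?_⟩, fun n m => ?_⟩
  · simpa [h] using hG_alternates 1 m
  · simpa [h] using hG_alternates 0 m
  · rw [← hG_alternates]
    exact kj1_deformed_by_crossTermRatio_eq_zero (hcross n m)
end

section
/- Let t : ℤ² → ℝ satisfy equation (Carandini6): (t_{n+1,m+1} + t_{n+1,m} + 1)(t_{n,m+1} + t_{n,m} + 1) − (t_{n+1,m} + 1)(t_{n,m+1} + 1) = 0 for all (n,m) ∈ ℤ², with t_{n,m} + 1 ≠ 0 for all (n,m). Let w : ℤ² → ℝ satisfy w_{n,m} ≠ 0 for all (n,m) and the m-direction recursion (Carandini5): w_{n,m+1} = −((t_{n,m+1} + t_{n,m} + 1)/(t_{n,m} + 1))·w_{n,m} for all (n,m) ∈ ℤ². Assume moreover that S_{n,m} := w_{n,m} w_{n+1,m} + w_{n+1,m}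 w_{n,m+1} + w_{n,m+1} w_{n+1,m+1} is nonzero for all (n,m) ∈ ℤ². Then S_{n,m+1} = S_{n,m} for all (n,m) ∈ ℤ²; consequently there exists a function β : ℤ → ℝ (depending only on n) with β_n ≠ −1 for all n, such that w satisfies the non-autonomous equation (Carandini9): w_{n,m} w_{n+1,m} + w_{n+1,m} w_{n,m+1} + w_{n,m+1} w_{n+1,m+1} − (1 + β_n) = 0 for all (n,m) ∈ ℤ². -/
/-!
Write `P_{n,m} = w_{n,m} w_{n+1,m}`. Multiplying the two (Carandini5) recursions and using
(Carandini6) gives `P_{n,m+1} / (t_{n,m+1} + 1) = P_{n,m} / (t_{n,m} + 1)`, and the same two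
facts collapse `S_{n,m}` to `P_{n,m} / (t_{n,m} + 1)`. Hence `S_{n,m}` does not depend on `m`,
and `β_n := S_{n,0} - 1` works; `β_n ≠ -1` because `S ≠ 0`.
-/

/-- The left-hand side `S_{n,m}` of (kj1). -/
def kj1Sum (w : ℤ → ℤ → ℝ) (n m : ℤ) : ℝ :=
  w n m * w (n+1) m + w (n+1) m * w n (m+1) + w n (m+1) * w (n+1) (m+1)

section Carandini

variable {t w : ℤ → ℤ → ℝ} (hT : Carandini6 t) (ht1 : ∀ n m : ℤ, t n m + 1 ≠ 0)
  (hC5 : ∀ n m : ℤ, w n (m+1) = -((t n (m+1) + t n m + 1) / (t n m + 1)) * w n m)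
include hT ht1 hC5

theorem carandini5_mul_succ (n m : ℤ) :
    w n (m+1) * w (n+1) (m+1) * (t n m + 1) = w n m * w (n+1) m * (t n (m+1) + 1) := by
  have ha := ht1 n m
  have hc := ht1 (n+1) m
  rw [hC5 n m, hC5 (n+1) m]
  field_simp
  linear_combination w n m * w (n+1) m * hT n m

theorem kj1Sum_mul_add_one (n m : ℤ) :
    kj1Sum w n m * (t n m + 1) = w n m * w (n+1) m := by
  have hprod := carandini5_mul_succ hT ht1 hC5 n m
  have ha := ht1 n m
  unfold kj1Sum
  rw [hC5 n m] at hprod ⊢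
  field_simp at hprod ⊢
  linear_combination hprod

theorem kj1Sum_succ (n m : ℤ) : kj1Sum w n (m+1) = kj1Sum w n m := by
  have hb := ht1 n (m+1)
  have ha := ht1 n m
  refine mul_right_cancel₀ (mul_ne_zero hb ha) ?_
  linear_combination (t n m + 1) * kj1Sum_mul_add_one hT ht1 hC5 n (m+1)
    + carandini5_mul_succ hT ht1 hC5 n m
    - (t n (m+1) + 1) * kj1Sum_mul_add_one hT ht1 hC5 n m

theorem kj1Sum_eq_zero_index (n m : ℤ) : kj1Sum w n m = kj1Sum w n 0 := by
  have hper : Function.Periodic (kj1Sum w n) 1 := kj1Sum_succ hT ht1 hC5 n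
  simpa using hper.int_mul_eq m

end Carandini

theorem carandini6_to_carandini9_general (t : ℤ → ℤ → ℝ) (hT : Carandini6 t)
    (ht1 : ∀ n m : ℤ, t n m + 1 ≠ 0)
    (w : ℤ → ℤ → ℝ)
    (hC5 : ∀ n m : ℤ,
      w n (m+1) = -((t n (m+1) + t n m + 1) / (t n m + 1)) * w n m)
    (S : ℤ → ℤ → ℝ)
    (hS : ∀ n m : ℤ, S n m =
      w n m * w (n+1) m + w (n+1) m * w n (m+1) + w n (m+1) * w (n+1) (m+1))
    (hS0 : ∀ n m : ℤ, S n m ≠ 0) :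
    (∀ n m : ℤ, S n (m+1) = S n m) ∧
    ∃ β : ℤ → ℝ, (∀ n : ℤ, β n ≠ -1) ∧
      ∀ n m : ℤ,
        w n m * w (n+1) m + w (n+1) m * w n (m+1)
          + w n (m+1) * w (n+1) (m+1) - (1 + β n) = 0 := by
  have hSum : S = kj1Sum w := funext₂ hS
  subst hSum
  refine ⟨kj1Sum_succ hT ht1 hC5, fun n => kj1Sum w n 0 - 1, fun n => ?_, fun n m => ?_⟩
  · simpa [sub_eq_neg_self] using hS0 n 0
  · rw [← kj1Sum, kj1Sum_eq_zero_index hT ht1 hC5 n m]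
    ring

/-- Theorem 4 of the paper: if `t` satisfies (Carandini6) and `w` is defined
by the recursion (Carandini5), then `S_{n,m}` is independent of `m` and `w`
satisfies the non-autonomous equation (Carandini9) for some function
`β_n ≠ -1`. -/
theorem carandini6_to_carandini9 (t : ℤ → ℤ → ℝ) (hT : Carandini6 t)
    (ht1 : ∀ n m : ℤ, t n m + 1 ≠ 0)
    (w : ℤ → ℤ → ℝ) (hw0 : ∀ n m : ℤ, w n m ≠ 0)
    (hC5 : ∀ n m : ℤ,
      w n (m+1) = -((t n (m+1) + t n m + 1) / (t n m + 1)) * w n m)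
    (S : ℤ → ℤ → ℝ)
    (hS : ∀ n m : ℤ, S n m =
      w n m * w (n+1) m + w (n+1) m * w n (m+1) + w n (m+1) * w (n+1) (m+1))
    (hS0 : ∀ n m : ℤ, S n m ≠ 0) :
    (∀ n m : ℤ, S n (m+1) = S n m) ∧
    ∃ β : ℤ → ℝ, (∀ n : ℤ, β n ≠ -1) ∧
      ∀ n m : ℤ,
        w n m * w (n+1) m + w (n+1) m * w n (m+1)
          + w n (m+1) * w (n+1) (m+1) - (1 + β n) = 0 :=
  carandini6_to_carandini9_general t hT ht1 w hC5 S hS hS0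
end

section
/- Let u : ℤ² → ℝ satisfy equation (kj11): (u_{n,m} + u_{n+1,m+1})·u_{n+1,m}·u_{n,m+1} + 1 = 0 for all (n,m) ∈ ℤ², with u_{n,m} ≠ 0 and u_{n−1,m} u_{n,m} u_{n+1,m} ≠ 1 for all (n,m). Define t_{n,m} := 1/(u_{n−1,m} u_{n,m} u_{n+1,m} − 1). Then t_{n,m} ≠ 0 and t_{n,m} + 1 ≠ 0 for all (n,m), and the following identities hold for all (n,m) ∈ ℤ²: (Amaryllis) u_{n+1,m} = (t_{n,m} + 1)/(t_{n,m}·u_{n−1,m}·u_{n,m}); (kj13) u_{n,m+1} = −((t_{n,m+1} + t_{n,m} + 1)/(t_{n,m} + 1))·u_{n−1,m}; and (kj14) u_{n−1,m+1} = (t_{n,m} + 1)/(t_{n,m+1}·u_{n−1,m}·u_{n,m}). -/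
/-!
Write `X n m = u (n-1) m * u n m * u (n+1) m`. The transformation (kj12) says `t (X - 1) = 1`,
i.e. `t X = t + 1`, which is (Amaryllis) and shows `t + 1 ≠ 0`. Equation (kj11) at `(n-1, m)` and
at `(n, m)` combine into `u (n-1) (m+1) (X n m - 1) = u (n+1) m (X n (m+1) - 1)`, that is
`t n (m+1) u (n-1) (m+1) = t n m u (n+1) m`, which is (kj14); (kj13) is (kj11) at `(n-1, m)`
rewritten with these two relations.
-/

/-- The Mikhailov–Xenitidis equation (kj11) for a field `u : ℤ² → ℝ`. -/
def Kj11 (u : ℤ → ℤ → ℝ) : Prop :=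
  ∀ n m : ℤ,
    (u n m + u (n+1) (m+1)) * u (n+1) m * u n (m+1) + 1 = 0

theorem mul_eq_add_one_of_eq_one_div_sub_one {K : Type*} [Field K] {x t : K} (hx : x ≠ 1)
    (ht : t = 1 / (x - 1)) : t * x = t + 1 := by
  rw [ht]
  field_simp [sub_ne_zero.2 hx]
  ring

theorem kj11_pair_cross_relation {R : Type*} [CommRing R] {a b c d e f : R}
    (h₁ : (a + e) * b * d + 1 = 0) (h₂ : (b + f) * c * e + 1 = 0) :
    d * (a * b * c - 1) = c * (d * e * f - 1) := by
  linear_combination c * h₁ - d * h₂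

namespace Kj11

variable {u t : ℤ → ℤ → ℝ}

theorem eq_at_sub_one (hu : Kj11 u) (n m : ℤ) :
    (u (n-1) m + u n (m+1)) * u n m * u (n-1) (m+1) + 1 = 0 := by
  simpa only [sub_add_cancel] using hu (n-1) m

theorem cross_relation (hu : Kj11 u) (n m : ℤ) :
    u (n-1) (m+1) * (u (n-1) m * u n m * u (n+1) m - 1) =
      u (n+1) m * (u (n-1) (m+1) * u n (m+1) * u (n+1) (m+1) - 1) :=
  kj11_pair_cross_relation (hu.eq_at_sub_one n m) (hu n m)

theorem kj12_succ_mul_eq (hu : Kj11 u) (hu1 : ∀ n m : ℤ, u (n-1) m * u n m * u (n+1) m ≠ 1)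
    (ht : ∀ n m : ℤ, t n m = 1 / (u (n-1) m * u n m * u (n+1) m - 1)) (n m : ℤ) :
    t n (m+1) * u (n-1) (m+1) = t n m * u (n+1) m := by
  rw [ht, ht]
  field_simp [sub_ne_zero.2 (hu1 n m), sub_ne_zero.2 (hu1 n (m+1))]
  linear_combination hu.cross_relation n m

theorem kj13 (hu : Kj11 u) (hu0 : ∀ n m : ℤ, u n m ≠ 0)
    (htX : ∀ n m : ℤ, t n m * (u (n-1) m * u n m * u (n+1) m) = t n m + 1)
    (ht1 : ∀ n m : ℤ, t n m + 1 ≠ 0)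
    (hshift : ∀ n m : ℤ, t n (m+1) * u (n-1) (m+1) = t n m * u (n+1) m) (n m : ℤ) :
    u n (m+1) = -((t n (m+1) + t n m + 1) / (t n m + 1)) * u (n-1) m := by
  field_simp [ht1 n m]
  refine mul_left_cancel₀ (hu0 (n-1) (m+1)) ?_
  linear_combination t n m * u (n-1) m * u (n+1) m * hu.eq_at_sub_one n m + u (n-1) m * hshift n m -
    u (n-1) (m+1) * (u n (m+1) + u (n-1) m) * htX n m

end Kj11

/-- Theorem 5 of the paper: the identities (Amaryllis), (kj13), (kj14) for
the transformation (kj12) of (kj11). -/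
theorem kj11_amaryllis_identities (u : ℤ → ℤ → ℝ) (hu : Kj11 u)
    (hu0 : ∀ n m : ℤ, u n m ≠ 0)
    (hu1 : ∀ n m : ℤ, u (n-1) m * u n m * u (n+1) m ≠ 1)
    (t : ℤ → ℤ → ℝ)
    (ht : ∀ n m : ℤ, t n m = 1 / (u (n-1) m * u n m * u (n+1) m - 1)) :
    (∀ n m : ℤ, t n m ≠ 0) ∧
    (∀ n m : ℤ, t n m + 1 ≠ 0) ∧
    (∀ n m : ℤ, u (n+1) m = (t n m + 1) / (t n m * u (n-1) m * u n m)) ∧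
    (∀ n m : ℤ,
      u n (m+1) = -((t n (m+1) + t n m + 1) / (t n m + 1)) * u (n-1) m) ∧
    (∀ n m : ℤ,
      u (n-1) (m+1) = (t n m + 1) / (t n (m+1) * u (n-1) m * u n m)) := by
  have ht0 (n m : ℤ) : t n m ≠ 0 := by
    rw [ht]
    exact one_div_ne_zero (sub_ne_zero.2 (hu1 n m))
  have htX (n m : ℤ) := mul_eq_add_one_of_eq_one_div_sub_one (hu1 n m) (ht n m)
  have ht1 (n m : ℤ) : t n m + 1 ≠ 0 := by
    rw [← htX]
    exact mul_ne_zero (ht0 n m) (by simp [hu0])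
  have hshift := hu.kj12_succ_mul_eq hu1 ht
  refine ⟨ht0, ht1, fun n m => ?_, hu.kj13 hu0 htX ht1 hshift, fun n m => ?_⟩
  · rw [eq_div_iff (by simp [ht0, hu0])]
    linear_combination htX n m
  · rw [eq_div_iff (by simp [ht0, hu0])]
    linear_combination u (n-1) m * u n m * hshift n m + htX n m
end

section
/- Let t : ℤ² → ℝ satisfy equation (Carandini6): (t_{n+1,m+1} + t_{n+1,m} + 1)(t_{n,m+1} + t_{n,m} + 1) − (t_{n+1,m} + 1)(t_{n,m+1} + 1) = 0 for all (n,m) ∈ ℤ², with t_{n,m} ≠ 0 for all (n,m). Define z_{n,m} := 1/t_{n,m}. Then z satisfies equation (kj16): z_{n,m} z_{n+1,m} + z_{n,m+1} z_{n+1,m+1} + z_{n+1,m} z_{n,m+1} (z_{n+1,m+1} + z_{n,m} + 1) = 0 for all (n,m) ∈ ℤ². -/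
/-- Equation (kj16) for a field `z : ℤ² → ℝ`. -/
def Kj16 (z : ℤ → ℤ → ℝ) : Prop :=
  ∀ n m : ℤ,
    z n m * z (n+1) m + z n (m+1) * z (n+1) (m+1)
      + z (n+1) m * z n (m+1) * (z (n+1) (m+1) + z n m + 1) = 0

/-! With `a, b, c, d` the values of `t` at `(n,m), (n+1,m), (n,m+1), (n+1,m+1)`, multiplying the
(kj16) quad-relation for `z = 1/t` by `abcd` gives `cd + ab + a + d + ad`, which is exactly the
expanded (Carandini6) quad-relation for `t`. -/

section QuadRelation

variable {K : Type*} [Field K] {a b c d : K}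

theorem mul_kj16_quad_inv (ha : a ≠ 0) (hb : b ≠ 0) (hc : c ≠ 0) (hd : d ≠ 0) :
    a * b * c * d * (a⁻¹ * b⁻¹ + c⁻¹ * d⁻¹ + b⁻¹ * c⁻¹ * (d⁻¹ + a⁻¹ + 1)) =
      (d + b + 1) * (c + a + 1) - (b + 1) * (c + 1) := by
  field_simp
  ring

theorem kj16_quad_inv_eq_zero (ha : a ≠ 0) (hb : b ≠ 0) (hc : c ≠ 0) (hd : d ≠ 0)
    (h : (d + b + 1) * (c + a + 1) - (b + 1) * (c + 1) = 0) :
    a⁻¹ * b⁻¹ + c⁻¹ * d⁻¹ + b⁻¹ * c⁻¹ * (d⁻¹ + a⁻¹ + 1) = 0 := by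
  have habcd : a * b * c * d ≠ 0 := by positivity
  rw [← mul_kj16_quad_inv ha hb hc hd] at h
  exact (mul_eq_zero.mp h).resolve_left habcd

end QuadRelation

/-- Theorem 6 of the paper: the inversion `z = 1/t` maps solutions of
(Carandini6) to solutions of (kj16). -/
theorem carandini6_to_kj16 (t : ℤ → ℤ → ℝ) (hT : Carandini6 t)
    (ht0 : ∀ n m : ℤ, t n m ≠ 0)
    (z : ℤ → ℤ → ℝ) (hz : ∀ n m : ℤ, z n m = 1 / t n m) :
    Kj16 z := by
  intro n m
  simp only [hz, one_div]
  exact kj16_quad_inv_eq_zero (ht0 n m) (ht0 (n + 1) m) (ht0 n (m + 1)) (ht0 (n + 1) (m + 1))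
    (hT n m)
end

section
/- Let λ ∈ ℝ with λ ≠ 0, and let t : ℤ² → ℝ satisfy equation (Carandini6): (t_{n+1,m+1} + t_{n+1,m} + 1)(t_{n,m+1} + t_{n,m} + 1) − (t_{n+1,m} + 1)(t_{n,m+1} + 1) = 0 for all (n,m) ∈ ℤ², with t_{n,m} ≠ 0 and t_{n,m} + 1 ≠ 0 for all (n,m). Define the 3×3 real matrices M̃_{n,m} := [[0, 1 + 1/t_{n−1,m}, 0], [−1, −1 − 1/t_{n−1,m}, λ], [−1, 0, 1]] and Ñ_{n,m} := [[0, 0, 1], [1 + ρ_{n,m}, 0, −1 − ρ_{n,m}], [1/λ, −ρ_{n,m}/λ, 0]], where ρ_{n,m} := t_{n,m+1}·(t_{n−1,m} + 1)/(t_{n−1,m}·(t_{n,m} + 1)). Then the nonlocal Lax compatibility condition holds: for all (n,m) ∈ ℤ², M̃_{n,m+1}·Ñ_{n,m} = −((t_{n,m+1} + t_{n,m} + 1)/(t_{n,m} + 1))·Ñ_{n+1,m}·M̃_{n,m}. -/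
section GaugeLax

variable {K : Type*} [Field K]

/-- `M̃_{n,m} = gaugeLaxM lam (1 / t (n-1) m)` and `Ñ_{n,m} = gaugeLaxN lam ρ_{n,m}`. -/
def gaugeLaxM (lam s : K) : Matrix (Fin 3) (Fin 3) K :=
  !![0, 1 + s, 0;
     -1, -1 - s, lam;
     -1, 0, 1]

def gaugeLaxN (lam r : K) : Matrix (Fin 3) (Fin 3) K :=
  !![0, 0, 1;
     1 + r, 0, -1 - r;
     1 / lam, -r / lam, 0]

theorem gaugeLaxM_mul_gaugeLaxN {lam s s' r r' k : K} (hlam : lam ≠ 0)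
    (hkr' : k * r' = 1) (hs' : (1 + s') * (1 + r) = -k) (hr : r = -(1 + s) * (k + 1)) :
    gaugeLaxM lam s' * gaugeLaxN lam r = k • (gaugeLaxN lam r' * gaugeLaxM lam s) := by
  ext i j
  fin_cases i <;> fin_cases j <;>
    simp [gaugeLaxM, gaugeLaxN, Matrix.mul_apply, Fin.sum_univ_succ] <;>
    field_simp <;> grind

end GaugeLax

noncomputable def carandini6Rho (t : ℤ → ℤ → ℝ) (n m : ℤ) : ℝ :=
  t n (m+1) * (t (n-1) m + 1) / (t (n-1) m * (t n m + 1))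

namespace Carandini6

variable {t : ℤ → ℤ → ℝ}

theorem neg_div_mul_rho_succ (hT : Carandini6 t) (ht0 : ∀ n m : ℤ, t n m ≠ 0)
    (ht1 : ∀ n m : ℤ, t n m + 1 ≠ 0) (n m : ℤ) :
    -((t n (m+1) + t n m + 1) / (t n m + 1)) * carandini6Rho t (n+1) m = 1 := by
  have hx := ht0 n m
  have hx1 := ht1 n m
  have hu1 := ht1 (n+1) m
  rw [carandini6Rho, add_sub_cancel_right]
  field_simp
  linear_combination -hT n m

theorem one_add_inv_mul_one_add_rho (hT : Carandini6 t) (ht0 : ∀ n m : ℤ, t n m ≠ 0)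
    (ht1 : ∀ n m : ℤ, t n m + 1 ≠ 0) (n m : ℤ) :
    (1 + 1 / t (n-1) (m+1)) * (1 + carandini6Rho t n m) =
      (t n (m+1) + t n m + 1) / (t n m + 1) := by
  have hy := ht0 (n-1) (m+1)
  have hx := ht0 (n-1) m
  have hu1 := ht1 n m
  have hquad := hT (n-1) m
  rw [sub_add_cancel] at hquad
  rw [carandini6Rho]
  field_simp
  linear_combination hquad

end Carandini6

/-- The nonlocal Lax compatibility condition (kk1) for the gauge-transformed
Lax matrices (kj18), (kj19) of equation (Carandini6). -/
theorem carandini6_nonlocal_lax (lam : ℝ) (hlam : lam ≠ 0)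
    (t : ℤ → ℤ → ℝ) (hT : Carandini6 t)
    (ht0 : ∀ n m : ℤ, t n m ≠ 0) (ht1 : ∀ n m : ℤ, t n m + 1 ≠ 0)
    (ρ : ℤ → ℤ → ℝ)
    (hρ : ∀ n m : ℤ,
      ρ n m = t n (m+1) * (t (n-1) m + 1) / (t (n-1) m * (t n m + 1)))
    (M N : ℤ → ℤ → Matrix (Fin 3) (Fin 3) ℝ)
    (hM : ∀ n m : ℤ, M n m =
      !![0, 1 + 1 / t (n-1) m, 0;
         -1, -1 - 1 / t (n-1) m, lam;
         -1, 0, 1])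
    (hN : ∀ n m : ℤ, N n m =
      !![0, 0, 1;
         1 + ρ n m, 0, -1 - ρ n m;
         1 / lam, -ρ n m / lam, 0]) :
    ∀ n m : ℤ,
      M n (m+1) * N n m =
        (-((t n (m+1) + t n m + 1) / (t n m + 1))) • (N (n+1) m * M n m) := by
  obtain rfl : ρ = carandini6Rho t := funext fun n => funext (hρ n)
  intro n m
  rw [hM, hM, hN, hN]
  apply gaugeLaxM_mul_gaugeLaxN (s := 1 / t (n-1) m) (s' := 1 / t (n-1) (m+1)) hlam
  · exact hT.neg_div_mul_rho_succ ht0 ht1 n m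
  · rw [neg_neg]
    exact hT.one_add_inv_mul_one_add_rho ht0 ht1 n m
  · have hx := ht0 (n-1) m
    have hu1 := ht1 n m
    rw [carandini6Rho]
    field_simp
    ring
end
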